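/- Let X be a separable F-space and T a continuous linear operator on X. Then T ⊕ T is hypercyclic on X × X if and only if for all non-empty open sets U₁, V₁, U₂, V₂ of X, the return sets satisfy N(U₁,V₁) ∩ N(U₂,V₂) ≠ ∅, where N(U,V) = {n ∈ ℕ : T^n(U) ∩ V ≠ ∅}. -/

import Mathlib

open Filter Topology Set
open scoped Classical

/-- The lower density of a set of natural numbers:
`liminf_{N→∞} |A ∩ [1,N]| / N`. -/
noncomputable def lowerDensity (A : Set ℕ) : ℝ :=
  Filter.liminf
    (fun N : ℕ => (((Finset.Icc 1 N).filter (fun n => n ∈ A)).card : ℝ) / N)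
    Filter.atTop

/-!
`T ⊕ T` acts on products of open sets coordinatewise, so the condition on return sets says
exactly that `T ⊕ T` is topologically transitive (boxes form a basis of `X × X`). On a
separable complete metric space, Birkhoff's transitivity theorem (a Baire category argument)
turns transitivity into a dense orbit. Conversely, a dense orbit in a space without isolated
points (such as a nonzero real topological vector space) stays dense after deleting finitely
many of its points, so it enters `V` after having entered `U`, which gives transitivity.
-/

def TopologicallyTransitive {Y : Type*} [TopologicalSpace Y] (f : Y → Y) : Prop :=
  ∀ U V : Set Y, IsOpen U → IsOpen V → U.Nonempty → V.Nonempty →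
    ∃ n, (f^[n] '' U ∩ V).Nonempty

namespace TopologicallyTransitive

variable {Y : Type*} [TopologicalSpace Y] {f : Y → Y}

theorem of_subsingleton [Subsingleton Y] (f : Y → Y) : TopologicallyTransitive f :=
  fun _ _ _ _ ⟨x, hxU⟩ ⟨y, hyV⟩ => ⟨0, x, mem_image_of_mem _ hxU, Subsingleton.elim y x ▸ hyV⟩

theorem of_dense_orbit [T1Space Y] [∀ y : Y, (𝓝[≠] y).NeBot] {z : Y}
    (hz : Dense (range fun n => f^[n] z)) : TopologicallyTransitive f := by
  intro U V hU hV hUne hVne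
  obtain ⟨_, ⟨m, rfl⟩, hmU⟩ := hz.exists_mem_open hU hUne
  have htail : Dense ((range fun n => f^[n] z) \ (fun k => f^[k] z) '' Iio m) :=
    hz.sdiff_finite ((finite_Iio m).image _)
  obtain ⟨_, ⟨⟨n, rfl⟩, hn⟩, hnV⟩ := htail.exists_mem_open hV hVne
  have hmn : m ≤ n := not_lt.1 fun h => hn ⟨n, h, rfl⟩
  refine ⟨n - m, _, mem_image_of_mem _ hmU, ?_⟩
  rwa [← Function.iterate_add_apply, Nat.sub_add_cancel hmn]

theorem exists_dense_orbit [Nonempty Y] [BaireSpace Y] [SecondCountableTopology Y]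
    (hf : Continuous f) (htr : TopologicallyTransitive f) :
    ∃ z, Dense (range fun n => f^[n] z) := by
  obtain ⟨b, hbc, hb0, hb⟩ := TopologicalSpace.exists_countable_basis Y
  let visitors (B : Set Y) : Set Y := ⋃ n, f^[n] ⁻¹' B
  have hopen : ∀ B ∈ b, IsOpen (visitors B) := fun B hB =>
    isOpen_iUnion fun n => (hb.isOpen hB).preimage (hf.iterate n)
  have hdense : ∀ B ∈ b, Dense (visitors B) := by
    intro B hB
    refine dense_iff_inter_open.2 fun U hU hUne => ?_
    have hBne : B.Nonempty := nonempty_iff_ne_empty.2 (ne_of_mem_of_not_mem hB hb0)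
    obtain ⟨n, _, ⟨x, hxU, rfl⟩, hxB⟩ := htr U B hU (hb.isOpen hB) hUne hBne
    exact ⟨x, hxU, mem_iUnion.2 ⟨n, hxB⟩⟩
  obtain ⟨z, hz⟩ := (dense_biInter_of_isOpen hopen hbc hdense).nonempty
  refine ⟨z, hb.dense_iff.2 fun B hB _ => ?_⟩
  obtain ⟨n, hn⟩ := mem_iUnion.1 (mem_iInter₂.1 hz B hB)
  exact ⟨_, hn, n, rfl⟩

end TopologicallyTransitive

theorem topologicallyTransitive_prodMap_iff {Y Z : Type*} [TopologicalSpace Y]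
    [TopologicalSpace Z] (f : Y → Y) (g : Z → Z) :
    TopologicallyTransitive (Prod.map f g) ↔
      ∀ U₁ V₁ : Set Y, ∀ U₂ V₂ : Set Z, IsOpen U₁ → IsOpen V₁ → IsOpen U₂ → IsOpen V₂ →
        U₁.Nonempty → V₁.Nonempty → U₂.Nonempty → V₂.Nonempty →
        ∃ n, (f^[n] '' U₁ ∩ V₁).Nonempty ∧ (g^[n] '' U₂ ∩ V₂).Nonempty := by
  have hbox : ∀ n (U₁ V₁ : Set Y) (U₂ V₂ : Set Z),
      ((Prod.map f g)^[n] '' U₁ ×ˢ U₂ ∩ V₁ ×ˢ V₂).Nonempty ↔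
        (f^[n] '' U₁ ∩ V₁).Nonempty ∧ (g^[n] '' U₂ ∩ V₂).Nonempty := by
    intro n U₁ V₁ U₂ V₂
    rw [Prod.map_iterate, prodMap_image_prod, prod_inter_prod, prod_nonempty_iff]
  constructor
  · intro htr U₁ V₁ U₂ V₂ hU₁ hV₁ hU₂ hV₂ hU₁ne hV₁ne hU₂ne hV₂ne
    obtain ⟨n, hn⟩ := htr _ _ (hU₁.prod hU₂) (hV₁.prod hV₂) (hU₁ne.prod hU₂ne) (hV₁ne.prod hV₂ne)
    exact ⟨n, (hbox n U₁ V₁ U₂ V₂).1 hn⟩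
  · rintro h U V hU hV ⟨⟨u₁, u₂⟩, hu⟩ ⟨⟨v₁, v₂⟩, hv⟩
    obtain ⟨U₁, U₂, hU₁, hU₂, hu₁, hu₂, hUU⟩ := isOpen_prod_iff.1 hU u₁ u₂ hu
    obtain ⟨V₁, V₂, hV₁, hV₂, hv₁, hv₂, hVV⟩ := isOpen_prod_iff.1 hV v₁ v₂ hv
    obtain ⟨n, hn⟩ := h U₁ V₁ U₂ V₂ hU₁ hV₁ hU₂ hV₂ ⟨u₁, hu₁⟩ ⟨v₁, hv₁⟩ ⟨u₂, hu₂⟩ ⟨v₂, hv₂⟩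
    exact ⟨n, ((hbox n U₁ V₁ U₂ V₂).2 hn).mono (inter_subset_inter (image_mono hUU) hVV)⟩

/-- `T ⊕ T` is hypercyclic iff all pairs of return sets intersect. -/
theorem stmt_4 {X : Type*} [AddCommGroup X] [Module ℝ X] [MetricSpace X]
    [CompleteSpace X] [TopologicalSpace.SeparableSpace X]
    [IsTopologicalAddGroup X] [ContinuousSMul ℝ X]
    (T : X →L[ℝ] X) :
    (∃ z : X × X, Dense (Set.range fun n : ℕ => ((T.prodMap T) ^ n) z)) ↔
      (∀ U₁ V₁ U₂ V₂ : Set X, IsOpen U₁ → IsOpen V₁ → IsOpen U₂ → IsOpen V₂ →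
        U₁.Nonempty → V₁.Nonempty → U₂.Nonempty → V₂.Nonempty →
        ({n : ℕ | ((T ^ n) '' U₁ ∩ V₁).Nonempty} ∩
          {n : ℕ | ((T ^ n) '' U₂ ∩ V₂).Nonempty}).Nonempty) := by
  have hpow : ∀ n, ⇑((T.prodMap T) ^ n) = (Prod.map T T)^[n] := fun n => by
    rw [FunLike.coe_pow_eq_iterate, ContinuousLinearMap.coe_prodMap']
  simp only [hpow, FunLike.coe_pow_eq_iterate]
  refine Iff.trans ?_ (topologicallyTransitive_prodMap_iff _ _)
  constructor
  · rintro ⟨z, hz⟩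
    rcases subsingleton_or_nontrivial X with hX | hX
    · exact .of_subsingleton _
    · exact .of_dense_orbit hz
  · exact TopologicallyTransitive.exists_dense_orbit (T.continuous.prodMap T.continuous)
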